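/- arXiv:2512.09135 — 3 statements merged into one kernel-verified Lean document; each statement's English description precedes it below -/
import Mathlib

section
/- The group G = ⟨a, b, s, t | b⁻¹ab = a, s⁻¹a²s = a⁴, t⁻¹at = a², t⁻¹bt = b, t⁻¹st = s⁻¹bs²⟩ is non-Hopfian: there exists a group homomorphism Ψ : G → G that is surjective but not injective. -/
/-!
Let `H = ⟨a, b, s ∣ [a, b], s⁻¹a²s = a⁴⟩`, an HNN extension of `ℤ²`, and let `φ` be its
endomorphism `a ↦ a², b ↦ b, s ↦ s⁻¹bs²`; `G` is `H` with one more letter `t` acting on `H` as `φ`.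
The endomorphism `a ↦ a²` of `G` fixing `b, s, t` is onto because `a = t a² t⁻¹`, and it kills
`w = [s a² s⁻¹, b]` because `s a⁴ s⁻¹ = a²`.

To see `w ≠ 1`, map `G` to the ascending HNN extension of `H ⧸ ⋃ ker φⁿ` along the injective map
induced by `φ`. The image of `w` is the class of `[s a² s⁻¹, b] ∈ H`, which survives because no
`φⁿ` kills it: `φⁿ (s a² s⁻¹) = fₙ a² fₙ⁻¹` for explicit words `fₙ` in `s, b` ending in `s`, so
`fₙ a² fₙ⁻¹ b fₙ a⁻² fₙ⁻¹` is a pinch-free word containing `s`, and by Britton's lemma it is not `b`.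
-/

/-- Generators `a`, `b`, `s`, `t` of the presented group `G`. -/
inductive Gen4 : Type
  | a | b | s | t

open FreeGroup in
/-- The relators `b⁻¹aba⁻¹`, `s⁻¹a²sa⁻⁴`, `t⁻¹ata⁻²`, `t⁻¹btb⁻¹`, `t⁻¹st(s⁻¹bs²)⁻¹`. -/
def relsG : Set (FreeGroup Gen4) :=
  {(of Gen4.b)⁻¹ * of Gen4.a * of Gen4.b * (of Gen4.a)⁻¹,
   (of Gen4.s)⁻¹ * (of Gen4.a) ^ 2 * of Gen4.s * ((of Gen4.a) ^ 4)⁻¹,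
   (of Gen4.t)⁻¹ * of Gen4.a * of Gen4.t * ((of Gen4.a) ^ 2)⁻¹,
   (of Gen4.t)⁻¹ * of Gen4.b * of Gen4.t * (of Gen4.b)⁻¹,
   (of Gen4.t)⁻¹ * of Gen4.s * of Gen4.t *
     ((of Gen4.s)⁻¹ * of Gen4.b * (of Gen4.s) ^ 2)⁻¹}

/-- The group `G = ⟨a,b,s,t ∣ b⁻¹ab = a, s⁻¹a²s = a⁴, t⁻¹at = a², t⁻¹bt = b, t⁻¹st = s⁻¹bs²⟩`. -/
abbrev G : Type := PresentedGroup relsG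

open scoped commutatorElement

theorem inv_mul_pow_mul {K : Type*} [Group K] (g x : K) (n : ℕ) :
    g⁻¹ * x ^ n * g = (g⁻¹ * x * g) ^ n := by
  simpa using (conj_pow (a := g⁻¹) (b := x) (i := n)).symm

namespace HNNExtension

open NormalWord

variable {G : Type*} [Group G] {A B : Subgroup G} {φ : A ≃* B}

/-- `IsReducedTWord x u v`: `x = t ^ u * g₁ * t ^ u₂ * ⋯ * gₖ * t ^ v` with no pinch
`t ^ e * g * t ^ (-e)`, `g ∈ toSubgroup A B e`. -/
inductive IsReducedTWord : HNNExtension G A B φ → ℤˣ → ℤˣ → Prop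
  | t_zpow (u : ℤˣ) : IsReducedTWord (t ^ (u : ℤ)) u u
  | t_zpow_mul_of_mul {u v w : ℤˣ} {g : G} {x : HNNExtension G A B φ} :
      (g ∈ toSubgroup A B u → u = v) → IsReducedTWord x v w →
        IsReducedTWord (t ^ (u : ℤ) * of g * x) u w

namespace IsReducedTWord

variable {x y : HNNExtension G A B φ} {u v v' w : ℤˣ} {g : G}

theorem exists_reducedWord (hx : IsReducedTWord x u v) :
    ∃ r : ReducedWord G A B,
      r.head = 1 ∧ r.prod φ = x ∧ r.toList.head?.map Prod.fst = some u := by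
  induction hx with
  | t_zpow u =>
    exact ⟨⟨1, [(u, 1)], List.isChain_singleton _⟩, rfl, by simp [ReducedWord.prod], rfl⟩
  | @t_zpow_mul_of_mul u v w g x hg _ ih =>
    obtain ⟨r, hr1, hrx, hru⟩ := ih
    refine ⟨⟨1, (u, g) :: r.toList, List.isChain_cons.2 ⟨?_, r.chain⟩⟩, rfl, ?_, rfl⟩
    · intro p hp hmem
      rw [Option.mem_def] at hp
      rw [hp, Option.map_some, Option.some_inj] at hru
      rw [hg hmem, hru]
    · rw [← hrx]
      simp [ReducedWord.prod, hr1, mul_assoc]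

theorem notMem_range (hx : IsReducedTWord x u v) : x ∉ (of : G →* _).range := fun hmem => by
  obtain ⟨r, -, rfl, hru⟩ := hx.exists_reducedWord
  simp [ReducedWord.toList_eq_nil_of_mem_of_range φ r hmem] at hru

theorem mul_of_mul (hx : IsReducedTWord x u v) (hg : g ∈ toSubgroup A B v → v = v')
    (hy : IsReducedTWord y v' w) : IsReducedTWord (x * of g * y) u w := by
  induction hx with
  | t_zpow u => exact t_zpow_mul_of_mul hg hy
  | t_zpow_mul_of_mul hg' _ ih => simpa only [mul_assoc] using t_zpow_mul_of_mul hg' (ih hg)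

theorem mul_of_mul_of_notMem (hx : IsReducedTWord x u v) (hg : g ∉ toSubgroup A B v)
    (hy : IsReducedTWord y v' w) : IsReducedTWord (x * of g * y) u w :=
  hx.mul_of_mul (fun h => (hg h).elim) hy

theorem inv (hx : IsReducedTWord x u v) : IsReducedTWord x⁻¹ (-v) (-u) := by
  induction hx with
  | t_zpow u => simpa [zpow_neg] using t_zpow (φ := φ) (-u)
  | @t_zpow_mul_of_mul u v w g x hg _ ih =>
    have hg' : g⁻¹ ∈ toSubgroup A B (-v) → -v = -u := fun hmem => by
      by_cases huv : u = v
      · rw [huv]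
      · obtain rfl := Int.units_ne_iff_eq_neg.mp huv
        exact absurd (hg (inv_mem_iff.mp hmem)) huv
    simpa [mul_assoc, zpow_neg] using ih.mul_of_mul hg' (t_zpow (-u))

end IsReducedTWord

end HNNExtension

namespace MonoidHom

variable {H : Type*} [Group H] (φ : H →* H)

def eventualKer : Subgroup H where
  carrier := {h | ∃ n, φ^[n] h = 1}
  one_mem' := ⟨0, rfl⟩
  mul_mem' := by
    rintro x y ⟨m, hm⟩ ⟨n, hn⟩
    refine ⟨m + n, ?_⟩
    have hx : φ^[m + n] x = 1 := by rw [add_comm, Function.iterate_add_apply, hm, iterate_map_one]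
    have hy : φ^[m + n] y = 1 := by rw [Function.iterate_add_apply, hn, iterate_map_one]
    rw [iterate_map_mul, hx, hy, one_mul]
  inv_mem' := by
    rintro x ⟨n, hn⟩
    exact ⟨n, by rw [iterate_map_inv, hn, inv_one]⟩

instance : φ.eventualKer.Normal where
  conj_mem x := by
    rintro ⟨n, hn⟩ g
    exact ⟨n, by simp only [iterate_map_mul, iterate_map_inv, hn, mul_one, mul_inv_cancel]⟩

theorem eventualKer_le_comap : φ.eventualKer ≤ φ.eventualKer.comap φ := fun _ ⟨n, hn⟩ =>
  ⟨n, by rw [← Function.iterate_succ_apply, Function.iterate_succ_apply', hn, map_one]⟩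

noncomputable def eventualKerQuotientMap : H ⧸ φ.eventualKer →* H ⧸ φ.eventualKer :=
  QuotientGroup.map _ _ φ φ.eventualKer_le_comap

theorem eventualKerQuotientMap_injective : Function.Injective φ.eventualKerQuotientMap := by
  rw [← ker_eq_bot_iff, eq_bot_iff]
  rintro ⟨h⟩ hh
  obtain ⟨n, hn⟩ := (QuotientGroup.eq_one_iff _).mp hh
  exact (QuotientGroup.eq_one_iff h).mpr ⟨n + 1, hn⟩

abbrev AscendingHNN : Type _ :=
  HNNExtension (H ⧸ φ.eventualKer) ⊤ φ.eventualKerQuotientMap.range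
    (Subgroup.topEquiv.trans (ofInjective φ.eventualKerQuotientMap_injective))

namespace AscendingHNN

noncomputable def of : H →* φ.AscendingHNN := HNNExtension.of.comp (QuotientGroup.mk' _)

variable {φ}

theorem t_mul_of_mul_inv_t (h : H) :
    (HNNExtension.t : φ.AscendingHNN) * of φ h * HNNExtension.t⁻¹ = of φ (φ h) := by
  have := HNNExtension.t_mul_of
    (φ := Subgroup.topEquiv.trans (ofInjective φ.eventualKerQuotientMap_injective))
    ⟨(h : H ⧸ φ.eventualKer), Subgroup.mem_top _⟩
  exact mul_inv_eq_of_eq_mul this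

theorem exists_iterate_eq_one_of_of_eq_one {h : H} (hh : of φ h = 1) : ∃ n, φ^[n] h = 1 :=
  (QuotientGroup.eq_one_iff h).mp <| HNNExtension.of_injective _ <| hh.trans (map_one _).symm

end AscendingHNN

end MonoidHom

namespace H

abbrev Base : Type := Multiplicative (ℤ × ℤ)

def α : Base := .ofAdd (1, 0)
def β : Base := .ofAdd (0, 1)

def double : Base →* Base :=
  AddMonoidHom.toMultiplicative (((2 : ℤ) • AddMonoidHom.fst ℤ ℤ).prod (AddMonoidHom.snd ℤ ℤ))

theorem double_α : double α = α ^ 2 := rfl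

theorem double_injective : Function.Injective double := fun x y h => by
  obtain ⟨h₁, h₂⟩ := Prod.ext_iff.mp (congrArg Multiplicative.toAdd h)
  exact Multiplicative.toAdd.injective
    (Prod.ext (by simpa [double] using h₁) (by simpa [double] using h₂))

def B : Subgroup Base := .zpowers (α ^ 2)
def A : Subgroup Base := B.map double

theorem A_eq_zpowers : A = .zpowers (α ^ 4) := by
  rw [A, B, MonoidHom.map_zpowers, map_pow, double_α, ← pow_mul]

theorem A_le_B : A ≤ B := by
  rw [A_eq_zpowers, B, Subgroup.zpowers_le]
  exact ⟨2, by simp [← pow_mul]⟩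

noncomputable def equivAB : A ≃* B := (B.equivMapOfInjective double double_injective).symm

theorem toAdd_zpow_α (k : ℤ) : Multiplicative.toAdd (α ^ k) = (k, 0) := by
  simp [α]

theorem β_notMem_toSubgroup (u : ℤˣ) : β ∉ HNNExtension.toSubgroup A B u := by
  have hle : HNNExtension.toSubgroup A B u ≤ .zpowers α := by
    rcases Int.units_eq_one_or u with rfl | rfl
    · exact A_le_B.trans (Subgroup.zpowers_le.mpr (pow_mem (Subgroup.mem_zpowers α) 2))
    · exact Subgroup.zpowers_le.mpr (pow_mem (Subgroup.mem_zpowers α) 2)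
  rintro hβ
  obtain ⟨k, hk⟩ := Subgroup.mem_zpowers_iff.mp (hle hβ)
  have := congrArg Multiplicative.toAdd hk
  rw [toAdd_zpow_α] at this
  simp [β] at this

theorem α_sq_notMem_A : α ^ 2 ∉ A := by
  rw [A_eq_zpowers]
  rintro ⟨k, hk⟩
  have := congrArg Multiplicative.toAdd hk
  simp only [← zpow_natCast, ← zpow_mul, toAdd_zpow_α, Prod.mk.injEq] at this
  omega

end H

/-- `H = ⟨a, b, s ∣ [a, b], s⁻¹a²s = a⁴⟩`, with `a = α`, `b = β` and `s = t` conjugating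
`α⁴ = double (α ^ 2)` to `α²`. -/
abbrev H : Type := HNNExtension H.Base H.A H.B H.equivAB

namespace H

open HNNExtension

noncomputable def a : H := of α
noncomputable def b : H := of β
noncomputable def s : H := t

theorem equivAB_double {y : Base} (hy : y ∈ B) :
    (equivAB ⟨double y, Subgroup.mem_map_of_mem _ hy⟩ : Base) = y :=
  congrArg Subtype.val ((B.equivMapOfInjective double double_injective).symm_apply_apply ⟨y, hy⟩)

theorem s_mul_of_double_mul_inv_s {y : Base} (hy : y ∈ B) :
    s * of (double y) * s⁻¹ = of y := by
  have := t_mul_of (φ := equivAB) ⟨double y, Subgroup.mem_map_of_mem _ hy⟩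
  rw [equivAB_double hy] at this
  exact mul_inv_eq_of_eq_mul this

theorem inv_s_mul_a_sq_mul_s : s⁻¹ * a ^ 2 * s = a ^ 4 := by
  have h := s_mul_of_double_mul_inv_s (Subgroup.mem_zpowers (α ^ 2))
  rw [map_pow, double_α, ← pow_mul] at h
  rw [a, ← map_pow, ← map_pow, ← h]
  group

theorem commute_of (x y : Base) : Commute (of x : H) (of y) := (Commute.all x y).map of

theorem inv_b_mul_a_mul_b : b⁻¹ * a * b = a := by
  rw [a, b, mul_assoc, (commute_of α β).eq, inv_mul_cancel_left]

noncomputable def endo : H →* H :=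
  lift (of.comp double) (s⁻¹ * b * s ^ 2) <| by
    rintro ⟨_, y, hy, rfl⟩
    have hz := A_le_B (Subgroup.mem_map_of_mem double hy)
    have e₁ : of (double y) = s⁻¹ * of y * s := by rw [← s_mul_of_double_mul_inv_s hy]; group
    have e₂ : of (double (double y)) = s⁻¹ * of (double y) * s := by
      rw [← s_mul_of_double_mul_inv_s hz]; group
    simp only [MonoidHom.comp_apply, equivAB_double hy]
    rw [e₂, e₁]
    calc s⁻¹ * b * s ^ 2 * (s⁻¹ * (s⁻¹ * of y * s) * s)
      _ = s⁻¹ * (b * of y) * s ^ 2 := by simp only [pow_two]; group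
      _ = s⁻¹ * (of y * b) * s ^ 2 := by rw [b, (commute_of β y).eq]
      _ = s⁻¹ * of y * s * (s⁻¹ * b * s ^ 2) := by group

theorem endo_of (x : Base) : endo (of x) = of (double x) := lift_of _ _ _ _
theorem endo_s : endo s = s⁻¹ * b * s ^ 2 := lift_t _ _ _
theorem endo_a : endo a = a ^ 2 := by rw [a, endo_of, double_α, map_pow]
theorem endo_b : endo b = b := endo_of β

theorem iterate_endo_b (n : ℕ) : endo^[n] b = b := Function.iterate_fixed endo_b n

theorem iterate_endo_s_succ (n : ℕ) :
    endo^[n + 1] s = (endo^[n] s)⁻¹ * b * (endo^[n] s) ^ 2 := by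
  rw [Function.iterate_succ_apply, endo_s, iterate_map_mul, iterate_map_mul, iterate_map_inv,
    iterate_map_pow, iterate_endo_b]

theorem endo_s_mul_a_sq_mul_inv_s :
    endo (s * a ^ 2 * s⁻¹) = s⁻¹ * b * (s * a ^ 2 * s⁻¹) * b⁻¹ * s := by
  have h : s * a ^ 4 * s⁻¹ = a ^ 2 := by rw [← inv_s_mul_a_sq_mul_s]; group
  rw [map_mul, map_mul, map_inv, map_pow, endo_s, endo_a, ← pow_mul, ← h]
  simp only [pow_two]
  group

noncomputable def stem : ℕ → H
  | 0 => s
  | n + 1 => (endo^[n] s)⁻¹ * b * stem n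

theorem iterate_endo_s_mul_a_sq_mul_inv_s (n : ℕ) :
    endo^[n] (s * a ^ 2 * s⁻¹) = stem n * a ^ 2 * (stem n)⁻¹ := by
  induction n with
  | zero => rfl
  | succ n ih =>
    rw [Function.iterate_succ_apply, endo_s_mul_a_sq_mul_inv_s]
    simp only [iterate_map_mul, iterate_map_inv, iterate_endo_b, ih, stem]
    group

theorem isReducedTWord_s : IsReducedTWord s 1 1 := by
  simpa [s] using IsReducedTWord.t_zpow (φ := equivAB) 1

/-- For `n ≥ 1`, `φⁿ s` begins with `s⁻¹` and ends with `s`, so its square has to be tracked as a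
reduced word of its own. -/
theorem isReducedTWord_iterate_endo_s (n : ℕ) :
    (∃ u v, IsReducedTWord (endo^[n] s) u v) ∧ ∃ u v, IsReducedTWord ((endo^[n] s) ^ 2) u v := by
  induction n with
  | zero =>
    refine ⟨⟨1, 1, isReducedTWord_s⟩, 1, 1, ?_⟩
    simpa [pow_two, s] using
      IsReducedTWord.t_zpow_mul_of_mul (g := 1) (fun _ => rfl) isReducedTWord_s
  | succ n ih =>
    obtain ⟨⟨u, v, hc⟩, u', v', hc₂⟩ := ih
    rw [iterate_endo_s_succ]
    set c := endo^[n] s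
    have hsq : (c⁻¹ * b * c ^ 2) ^ 2 = c⁻¹ * b * (c * b * c ^ 2) := by
      simp only [pow_two]; group
    have hβ := β_notMem_toSubgroup
    rw [hsq]
    exact ⟨⟨-v, v', hc.inv.mul_of_mul_of_notMem (hβ _) hc₂⟩,
      -v, v', hc.inv.mul_of_mul_of_notMem (hβ _) (hc.mul_of_mul_of_notMem (hβ _) hc₂)⟩

theorem isReducedTWord_stem (n : ℕ) : ∃ u, IsReducedTWord (stem n) u 1 := by
  induction n with
  | zero => exact ⟨1, isReducedTWord_s⟩
  | succ n ih =>
    obtain ⟨u, hf⟩ := ih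
    obtain ⟨v, w, hc⟩ := (isReducedTWord_iterate_endo_s n).1
    exact ⟨-w, hc.inv.mul_of_mul_of_notMem (β_notMem_toSubgroup _) hf⟩

theorem iterate_endo_commutator_ne_one (n : ℕ) : endo^[n] ⁅s * a ^ 2 * s⁻¹, b⁆ ≠ 1 := by
  obtain ⟨u, hf⟩ := isReducedTWord_stem n
  have hX : IsReducedTWord (stem n * a ^ 2 * (stem n)⁻¹) u (-u) := by
    rw [a, ← map_pow]
    exact hf.mul_of_mul_of_notMem α_sq_notMem_A hf.inv
  have hcomm (x y : H) : endo^[n] ⁅x, y⁆ = ⁅endo^[n] x, endo^[n] y⁆ := by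
    simp only [commutatorElement_def, iterate_map_mul, iterate_map_inv]
  rw [hcomm, iterate_endo_s_mul_a_sq_mul_inv_s, iterate_endo_b, commutatorElement_def]
  intro h
  exact (hX.mul_of_mul_of_notMem (β_notMem_toSubgroup _) hX.inv).notMem_range
    ⟨β, (mul_inv_eq_one.mp h).symm⟩

end H

namespace G

def a : G := .of .a
def b : G := .of .b
def s : G := .of .s
def t : G := .of .t

theorem relsG_lift_eq_one_iff {K : Type*} [Group K] (f : Gen4 → K) :
    (∀ r ∈ relsG, FreeGroup.lift f r = 1) ↔
      (f .b)⁻¹ * f .a * f .b = f .a ∧ (f .s)⁻¹ * f .a ^ 2 * f .s = f .a ^ 4 ∧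
      (f .t)⁻¹ * f .a * f .t = f .a ^ 2 ∧ (f .t)⁻¹ * f .b * f .t = f .b ∧
      (f .t)⁻¹ * f .s * f .t = (f .s)⁻¹ * f .b * f .s ^ 2 := by
  simp only [relsG, Set.mem_insert_iff, Set.mem_singleton_iff, forall_eq_or_imp, forall_eq,
    map_mul, map_inv, map_pow, FreeGroup.lift_apply_of, mul_inv_eq_one]

theorem relations :
    b⁻¹ * a * b = a ∧ s⁻¹ * a ^ 2 * s = a ^ 4 ∧ t⁻¹ * a * t = a ^ 2 ∧ t⁻¹ * b * t = b ∧
      t⁻¹ * s * t = s⁻¹ * b * s ^ 2 := by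
  refine (relsG_lift_eq_one_iff PresentedGroup.of).mp fun r hr => ?_
  rw [show FreeGroup.lift PresentedGroup.of = PresentedGroup.mk relsG from
    FreeGroup.ext_hom _ _ fun _ => FreeGroup.lift_apply_of]
  exact PresentedGroup.one_of_mem hr

noncomputable def squareA : G →* G :=
  PresentedGroup.toGroup (f := fun | .a => a ^ 2 | .b => b | .s => s | .t => t) <|
    (relsG_lift_eq_one_iff _).mpr <| by
      obtain ⟨h₁, h₂, h₃, h₄, h₅⟩ := relations
      refine ⟨?_, ?_, ?_, h₄, h₅⟩ <;> dsimp only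
      · rw [inv_mul_pow_mul, h₁]
      · rw [inv_mul_pow_mul, h₂, ← pow_mul, ← pow_mul]
      · rw [inv_mul_pow_mul, h₃, ← pow_mul]

theorem squareA_a : squareA a = a ^ 2 := PresentedGroup.toGroup.of _
theorem squareA_b : squareA b = b := PresentedGroup.toGroup.of _
theorem squareA_s : squareA s = s := PresentedGroup.toGroup.of _
theorem squareA_t : squareA t = t := PresentedGroup.toGroup.of _

theorem squareA_surjective : Function.Surjective squareA := by
  rw [← MonoidHom.range_eq_top, eq_top_iff, ← PresentedGroup.closure_range_of,
    Subgroup.closure_le]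
  rintro _ ⟨x, rfl⟩
  cases x
  · refine ⟨t * a * t⁻¹, ?_⟩
    show squareA (t * a * t⁻¹) = a
    rw [map_mul, map_mul, map_inv, squareA_t, squareA_a, ← relations.2.2.1]
    group
  · exact ⟨b, squareA_b⟩
  · exact ⟨s, squareA_s⟩
  · exact ⟨t, squareA_t⟩

theorem commute_a_b : Commute a b := by
  have h := relations.1
  rwa [mul_assoc, inv_mul_eq_iff_eq_mul] at h

theorem squareA_commutator : squareA ⁅s * a ^ 2 * s⁻¹, b⁆ = 1 := by
  have h : s * a ^ 4 * s⁻¹ = a ^ 2 := by rw [← relations.2.1]; group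
  rw [map_commutatorElement, map_mul, map_mul, map_inv, map_pow, squareA_s, squareA_a,
    squareA_b, ← pow_mul, h, commutatorElement_eq_one_iff_commute]
  exact commute_a_b.pow_left 2

open MonoidHom.AscendingHNN in
noncomputable def toAscendingHNN : G →* H.endo.AscendingHNN :=
  PresentedGroup.toGroup (f := fun
      | .a => of _ H.a
      | .b => of _ H.b
      | .s => of _ H.s
      | .t => HNNExtension.t⁻¹) <|
    (relsG_lift_eq_one_iff _).mpr <| by
      refine ⟨?_, ?_, ?_, ?_, ?_⟩ <;> dsimp only
      · rw [← map_inv, ← map_mul, ← map_mul, H.inv_b_mul_a_mul_b]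
      · rw [← map_inv, ← map_pow, ← map_mul, ← map_mul, H.inv_s_mul_a_sq_mul_s, map_pow]
      · rw [inv_inv, t_mul_of_mul_inv_t, H.endo_a, map_pow]
      · rw [inv_inv, t_mul_of_mul_inv_t, H.endo_b]
      · rw [inv_inv, t_mul_of_mul_inv_t, H.endo_s, map_mul, map_mul, map_inv, map_pow]

theorem toAscendingHNN_a : toAscendingHNN a = MonoidHom.AscendingHNN.of _ H.a :=
  PresentedGroup.toGroup.of _
theorem toAscendingHNN_b : toAscendingHNN b = MonoidHom.AscendingHNN.of _ H.b :=
  PresentedGroup.toGroup.of _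
theorem toAscendingHNN_s : toAscendingHNN s = MonoidHom.AscendingHNN.of _ H.s :=
  PresentedGroup.toGroup.of _

theorem toAscendingHNN_commutator :
    toAscendingHNN ⁅s * a ^ 2 * s⁻¹, b⁆ =
      MonoidHom.AscendingHNN.of _ ⁅H.s * H.a ^ 2 * H.s⁻¹, H.b⁆ := by
  simp only [map_commutatorElement, map_mul, map_inv, map_pow, toAscendingHNN_a,
    toAscendingHNN_b, toAscendingHNN_s]

theorem commutator_ne_one : ⁅s * a ^ 2 * s⁻¹, b⁆ ≠ 1 := fun h => by
  obtain ⟨n, hn⟩ := MonoidHom.AscendingHNN.exists_iterate_eq_one_of_of_eq_one <| by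
    rw [← toAscendingHNN_commutator, h, map_one]
  exact H.iterate_endo_commutator_ne_one n hn

end G

/-- `G` is non-Hopfian: there is a surjective, non-injective endomorphism of `G`. -/
theorem G_not_hopfian :
    ∃ Ψ : G →* G, Function.Surjective Ψ ∧ ¬ Function.Injective Ψ :=
  ⟨G.squareA, G.squareA_surjective, fun hinj =>
    G.commutator_ne_one (hinj (G.squareA_commutator.trans (map_one _).symm))⟩
end

section
/- (Sapir–Wise) Let H be a group, let φ : H → H be an injective group homomorphism, and let ψ : H → H be a group homomorphism that is not injective, such that φ ∘ ψ = ψ ∘ φ and the range of φ is contained in the range of ψ. Let G be the ascending HNN-extension of H along φ, i.e., the HNN-extension of H with associated subgroups the full group H and the range of φ, where the isomorphism between them is induced by φ. Then there exists a group homomorphism Ψ : G → G that is surjective but not injective (so G is non-Hopfian); moreover Ψ restricts to ψ on H and fixes the stable letter. -/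
/-- **Sapir–Wise.** Let `φ : H → H` be injective and `ψ : H → H` a non-injective
endomorphism with `φ ∘ ψ = ψ ∘ φ` and `φ.range ≤ ψ.range`. Then the ascending
HNN-extension `G = ⟨H, t ∣ t⁻¹ht = φ(h)⟩` of `H` along `φ` admits a surjective,
non-injective endomorphism `Ψ` (so `G` is non-Hopfian) which restricts to `ψ` on `H`
and fixes the stable letter `t`. -/
theorem sapir_wise {H : Type*} [Group H] (φ ψ : H →* H)
    (hφ : Function.Injective φ) (hψ : ¬ Function.Injective ψ)
    (hcomm : φ.comp ψ = ψ.comp φ) (hrange : φ.range ≤ ψ.range) :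
    ∃ Ψ : HNNExtension H ⊤ φ.range
            (Subgroup.topEquiv.trans (MonoidHom.ofInjective hφ)) →*
          HNNExtension H ⊤ φ.range
            (Subgroup.topEquiv.trans (MonoidHom.ofInjective hφ)),
      Function.Surjective Ψ ∧ ¬ Function.Injective Ψ ∧
      (∀ h : H, Ψ (HNNExtension.of h) = HNNExtension.of (ψ h)) ∧
      Ψ HNNExtension.t = HNNExtension.t := by
  set e := Subgroup.topEquiv.trans (MonoidHom.ofInjective hφ) with he
  have hcomm' : ∀ h : H, φ (ψ h) = ψ (φ h) := fun h =>
    DFunLike.congr_fun hcomm h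
  have hx : ∀ a : (⊤ : Subgroup H),
      (HNNExtension.t : HNNExtension H ⊤ φ.range e) * HNNExtension.of (ψ a) =
        HNNExtension.of (ψ (e a : H)) * HNNExtension.t := by
    intro a
    have h1 : (HNNExtension.t : HNNExtension H ⊤ φ.range e) *
        HNNExtension.of ((⟨ψ a, trivial⟩ : (⊤ : Subgroup H)) : H) =
        HNNExtension.of (e ⟨ψ a, trivial⟩ : H) * HNNExtension.t :=
      HNNExtension.t_mul_of _
    have h2 : (e (⟨ψ a, trivial⟩ : (⊤ : Subgroup H)) : H) = φ (ψ a) := rfl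
    have h3 : (e a : H) = φ (a : H) := rfl
    rw [h2] at h1
    rw [h3, ← hcomm']
    exact h1
  refine ⟨HNNExtension.lift ((HNNExtension.of).comp ψ) HNNExtension.t hx, ?_, ?_, ?_, ?_⟩
  · -- surjective
    intro x
    induction x using HNNExtension.induction_on with
    | of h =>
      obtain ⟨h', hh'⟩ := hrange ⟨h, rfl⟩
      refine ⟨HNNExtension.t⁻¹ * HNNExtension.of h' * HNNExtension.t, ?_⟩
      have hc : (HNNExtension.of (e (⟨h, trivial⟩ : (⊤ : Subgroup H)) : H) :
          HNNExtension H ⊤ φ.range e) =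
          HNNExtension.t * HNNExtension.of h * HNNExtension.t⁻¹ :=
        HNNExtension.equiv_eq_conj _
      have h3 : (e (⟨h, trivial⟩ : (⊤ : Subgroup H)) : H) = φ h := rfl
      simp only [map_mul, map_inv, HNNExtension.lift_t, HNNExtension.lift_of,
        MonoidHom.comp_apply, hh']
      rw [← h3, hc]
      group
    | t => exact ⟨HNNExtension.t, by simp⟩
    | mul x y hx hy =>
      obtain ⟨a, rfl⟩ := hx; obtain ⟨b, rfl⟩ := hy
      exact ⟨a * b, by simp⟩
    | inv x hx =>
      obtain ⟨a, rfl⟩ := hx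
      exact ⟨a⁻¹, by simp⟩
  · -- not injective
    intro hinj
    apply hψ
    intro a b hab
    have : HNNExtension.of (ψ a) = (HNNExtension.of (ψ b) :
        HNNExtension H ⊤ φ.range e) := by rw [hab]
    have h1 := hinj (by
      simpa only [HNNExtension.lift_of, MonoidHom.comp_apply] using this :
      HNNExtension.lift ((HNNExtension.of).comp ψ) HNNExtension.t hx (HNNExtension.of a) =
      HNNExtension.lift ((HNNExtension.of).comp ψ) HNNExtension.t hx (HNNExtension.of b))
    exact HNNExtension.of_injective (φ := e) h1
  · intro h; simp
  · simp
end

section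
/- For integers p, q, k with p > 0 and (q, k) ≠ (0, 0), in the group H(p,q,k) the generators a and b commute, and the subgroup of H(p,q,k) generated by a and b is isomorphic to ℤ × ℤ. -/
/-- Generators `a`, `b`, `s` of the presented group `H(p,q,k)`. -/
inductive Gen3 : Type
  | a | b | s

open FreeGroup in
/-- The relators `b⁻¹aba⁻¹` and `s⁻¹aᵖs b⁻ᵏ a⁻ᵠ` of `H(p,q,k)`. -/
def relsHpqk (p q k : ℤ) : Set (FreeGroup Gen3) :=
  {(of Gen3.b)⁻¹ * of Gen3.a * of Gen3.b * (of Gen3.a)⁻¹,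
   (of Gen3.s)⁻¹ * (of Gen3.a) ^ p * of Gen3.s * ((of Gen3.b) ^ k)⁻¹ * ((of Gen3.a) ^ q)⁻¹}

/-- The group `H(p,q,k) = ⟨a, b, s ∣ b⁻¹ab = a, s⁻¹aᵖs = aᵠbᵏ⟩`. -/
abbrev Hpqk (p q k : ℤ) : Type := PresentedGroup (relsHpqk p q k)

/-- Translation matrix. -/
def tmat (v : ℚ × ℚ) : Matrix (Fin 3) (Fin 3) ℚ := !![1, 0, v.1; 0, 1, v.2; 0, 0, 1]

lemma tmat_mul (v w : ℚ × ℚ) : tmat v * tmat w = tmat (v + w) := by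
  ext i j
  fin_cases i <;> fin_cases j <;>
    simp [tmat, Matrix.mul_apply, Fin.sum_univ_succ, Matrix.vecHead, Matrix.vecTail] <;> ring

lemma tmat_zero : tmat 0 = 1 := by
  ext i j
  fin_cases i <;> fin_cases j <;>
    simp [tmat, Matrix.vecHead, Matrix.vecTail]

/-- Translations as units of the matrix ring. -/
def Tr : Multiplicative (ℚ × ℚ) →* (Matrix (Fin 3) (Fin 3) ℚ)ˣ where
  toFun x := ⟨tmat x.toAdd, tmat (-x.toAdd),
    by rw [tmat_mul, add_neg_cancel, tmat_zero],
    by rw [tmat_mul, neg_add_cancel, tmat_zero]⟩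
  map_one' := Units.ext (by simp [tmat_zero, tmat_mul])
  map_mul' x y := Units.ext (by simp [tmat_mul])

@[simp] lemma Tr_val (x : Multiplicative (ℚ × ℚ)) :
    (Tr x : Matrix (Fin 3) (Fin 3) ℚ) = tmat x.toAdd := rfl

lemma Tr_injective : Function.Injective Tr := by
  intro x y h
  have h' := congrArg Units.val h
  simp only [Tr_val] at h'
  have h1 := congrFun (congrFun h' 0) 2
  have h2 := congrFun (congrFun h' 1) 2
  simp [tmat, Matrix.vecHead, Matrix.vecTail] at h1 h2
  have : x.toAdd = y.toAdd := Prod.ext h1 h2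
  exact Multiplicative.toAdd.injective this

@[simp] lemma Tr_inv_val (x : Multiplicative (ℚ × ℚ)) :
    (((Tr x)⁻¹ : (Matrix (Fin 3) (Fin 3) ℚ)ˣ) : Matrix (Fin 3) (Fin 3) ℚ) = tmat (-x.toAdd) := rfl

def Smat (p q k : ℤ) : Matrix (Fin 3) (Fin 3) ℚ :=
  !![q * p / (q ^ 2 + k ^ 2), k * p / (q ^ 2 + k ^ 2), 0;
     -(k * p) / (q ^ 2 + k ^ 2), q * p / (q ^ 2 + k ^ 2), 0; 0, 0, 1]

def Sinv (p q k : ℤ) : Matrix (Fin 3) (Fin 3) ℚ :=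
  !![q / p, -(k / p), 0; k / p, q / p, 0; 0, 0, 1]

lemma mat3_eq {a b c d e f g h i a' b' c' d' e' f' g' h' i' : ℚ}
    (h1 : a = a') (h2 : b = b') (h3 : c = c') (h4 : d = d') (h5 : e = e')
    (h6 : f = f') (h7 : g = g') (h8 : h = h') (h9 : i = i') :
    !![a, b, c; d, e, f; g, h, i] = !![a', b', c'; d', e', f'; g', h', i'] := by
  subst_vars; rfl

section
variable {p q k : ℤ} (hp : (p : ℚ) ≠ 0) (hd : (q : ℚ) ^ 2 + (k : ℚ) ^ 2 ≠ 0)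
include hp hd

lemma Smat_mul_Sinv : Smat p q k * Sinv p q k = 1 := by
  rw [Smat, Sinv, Matrix.mul_fin_three, Matrix.one_fin_three]
  apply mat3_eq <;> field_simp <;> ring

lemma Sinv_mul_Smat : Sinv p q k * Smat p q k = 1 := by
  rw [Smat, Sinv, Matrix.mul_fin_three, Matrix.one_fin_three]
  apply mat3_eq <;> field_simp <;> ring

/-- `s` as a unit. -/
def SU : (Matrix (Fin 3) (Fin 3) ℚ)ˣ :=
  ⟨Smat p q k, Sinv p q k, Smat_mul_Sinv hp hd, Sinv_mul_Smat hp hd⟩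

lemma key_rel :
    Sinv p q k * tmat ((p : ℚ), 0) * Smat p q k * tmat (0, -(k : ℚ)) * tmat (-(q : ℚ), 0)
      = 1 := by
  rw [Smat, Sinv, tmat, tmat, tmat, Matrix.mul_fin_three, Matrix.mul_fin_three,
    Matrix.mul_fin_three, Matrix.mul_fin_three, Matrix.one_fin_three]
  apply mat3_eq <;> field_simp <;> ring

/-- Images of the generators. -/
def fgen : Gen3 → (Matrix (Fin 3) (Fin 3) ℚ)ˣ
  | .a => Tr (.ofAdd (1, 0))
  | .b => Tr (.ofAdd (0, 1))
  | .s => SU hp hd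

@[simp] lemma SU_val : ((SU hp hd : (Matrix (Fin 3) (Fin 3) ℚ)ˣ) : Matrix (Fin 3) (Fin 3) ℚ) = Smat p q k := rfl

@[simp] lemma SU_inv_val :
    (((SU hp hd)⁻¹ : (Matrix (Fin 3) (Fin 3) ℚ)ˣ) : Matrix (Fin 3) (Fin 3) ℚ) = Sinv p q k := rfl

lemma lift_rels : ∀ r ∈ relsHpqk p q k, FreeGroup.lift (fgen hp hd) r = 1 := by
  intro r hr
  simp only [relsHpqk, Set.mem_insert_iff, Set.mem_singleton_iff] at hr
  rcases hr with rfl | rfl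
  · simp only [map_mul, map_inv, FreeGroup.lift_apply_of, fgen]
    refine Units.ext ?_
    simp only [Units.val_mul, Tr_inv_val, Tr_val, toAdd_ofAdd, tmat_mul]
    rw [show (-((0:ℚ),(1:ℚ)) + ((1:ℚ),(0:ℚ)) + ((0:ℚ),(1:ℚ)) + -((1:ℚ),(0:ℚ))) = 0 by norm_num [Prod.ext_iff], tmat_zero, Units.val_one]
  · simp only [map_mul, map_inv, map_zpow, FreeGroup.lift_apply_of, fgen]
    have e1 : (Tr (.ofAdd ((1 : ℚ), (0 : ℚ)))) ^ p = Tr (.ofAdd ((p : ℚ), 0)) := by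
      rw [← map_zpow, ← ofAdd_zsmul]
      norm_num [Prod.smul_mk]
    have e2 : ((Tr (.ofAdd ((0 : ℚ), (1 : ℚ)))) ^ k)⁻¹ = (Tr (.ofAdd (0, (k : ℚ))))⁻¹ := by
      rw [← map_zpow, ← ofAdd_zsmul]
      norm_num [Prod.smul_mk]
    have e3 : ((Tr (.ofAdd ((1 : ℚ), (0 : ℚ)))) ^ q)⁻¹ = (Tr (.ofAdd ((q : ℚ), 0)))⁻¹ := by
      rw [← map_zpow, ← ofAdd_zsmul]
      norm_num [Prod.smul_mk]
    rw [e1, e2, e3]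
    refine Units.ext ?_
    simp only [Units.val_mul, SU_inv_val, SU_val, Tr_inv_val, Tr_val, toAdd_ofAdd, Prod.neg_mk,
      neg_zero]
    exact key_rel hp hd

end

/-- The homomorphism `ℤ × ℤ → G` determined by two commuting elements. -/
def zxz {G : Type*} [Group G] (A B : G) (h : A * B = B * A) :
    Multiplicative (ℤ × ℤ) →* G where
  toFun x := A ^ x.toAdd.1 * B ^ x.toAdd.2
  map_one' := by simp
  map_mul' x y := by
    have hc : Commute A B := h
    simp only [toAdd_mul, Prod.fst_add, Prod.snd_add, zpow_add]
    exact (hc.zpow_zpow y.toAdd.1 x.toAdd.2).mul_mul_mul_comm _ _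

/-- For `p > 0` and `(q, k) ≠ (0, 0)`, in `H(p,q,k)` the generators `a` and `b`
commute, and the subgroup they generate is isomorphic to `ℤ × ℤ`. -/
theorem ab_commute_and_zsq (p q k : ℤ) (hp : 0 < p) (hqk : (q, k) ≠ (0, 0)) :
    PresentedGroup.of (rels := relsHpqk p q k) Gen3.a *
        PresentedGroup.of (rels := relsHpqk p q k) Gen3.b =
      PresentedGroup.of (rels := relsHpqk p q k) Gen3.b *
        PresentedGroup.of (rels := relsHpqk p q k) Gen3.a ∧
    Nonempty ((Subgroup.closure
        {PresentedGroup.of (rels := relsHpqk p q k) Gen3.a,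
         PresentedGroup.of (rels := relsHpqk p q k) Gen3.b} : Subgroup (Hpqk p q k)) ≃*
      Multiplicative (ℤ × ℤ)) := by
  have hp' : (p : ℚ) ≠ 0 := by
    have : (0 : ℚ) < (p : ℚ) := by exact_mod_cast hp
    exact this.ne'
  have hd : (q : ℚ) ^ 2 + (k : ℚ) ^ 2 ≠ 0 := by
    have hqk' : q ≠ 0 ∨ k ≠ 0 := by
      by_contra h
      push_neg at h
      exact hqk (by simp [h.1, h.2])
    rcases hqk' with h | h
    · have hq : (q : ℚ) ≠ 0 := Int.cast_ne_zero.2 h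
      positivity
    · have hk : (k : ℚ) ≠ 0 := Int.cast_ne_zero.2 h
      positivity
  set A := PresentedGroup.of (rels := relsHpqk p q k) Gen3.a with hA
  set B := PresentedGroup.of (rels := relsHpqk p q k) Gen3.b with hB
  -- a and b commute
  have h1 : PresentedGroup.mk (relsHpqk p q k)
      ((FreeGroup.of Gen3.b)⁻¹ * FreeGroup.of Gen3.a * FreeGroup.of Gen3.b *
        (FreeGroup.of Gen3.a)⁻¹) = 1 := by
    apply (QuotientGroup.eq_one_iff _).2
    exact Subgroup.subset_normalClosure (Set.mem_insert _ _)
  simp only [map_mul, map_inv] at h1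
  have hmkA : PresentedGroup.mk (relsHpqk p q k) (FreeGroup.of Gen3.a) = A := rfl
  have hmkB : PresentedGroup.mk (relsHpqk p q k) (FreeGroup.of Gen3.b) = B := rfl
  rw [hmkA, hmkB] at h1
  have h2 : B⁻¹ * A * B = A := mul_inv_eq_one.mp h1
  have hcomm : A * B = B * A := by
    conv_rhs => rw [← h2]
    group
  refine ⟨hcomm, ⟨?_⟩⟩
  -- the homomorphism to matrices
  set φ := PresentedGroup.toGroup (lift_rels hp' hd) with hφ
  have φA : φ A = Tr (.ofAdd (1, 0)) := PresentedGroup.toGroup.of _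
  have φB : φ B = Tr (.ofAdd (0, 1)) := PresentedGroup.toGroup.of _
  set ψ := zxz A B hcomm with hψdef
  have t1 : ∀ m : ℤ, (Multiplicative.ofAdd ((1 : ℚ), (0 : ℚ))) ^ m
      = Multiplicative.ofAdd ((m : ℚ), (0 : ℚ)) := by
    intro m
    apply Multiplicative.toAdd.injective
    simp [toAdd_zpow, Prod.smul_mk]
  have t2 : ∀ n : ℤ, (Multiplicative.ofAdd ((0 : ℚ), (1 : ℚ))) ^ n
      = Multiplicative.ofAdd ((0 : ℚ), (n : ℚ)) := by
    intro n
    apply Multiplicative.toAdd.injective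
    simp [toAdd_zpow, Prod.smul_mk]
  have hψ : ∀ x : Multiplicative (ℤ × ℤ),
      φ (ψ x) = Tr (.ofAdd ((x.toAdd.1 : ℚ), (x.toAdd.2 : ℚ))) := by
    intro x
    show φ (A ^ x.toAdd.1 * B ^ x.toAdd.2) = _
    rw [map_mul, map_zpow, map_zpow, φA, φB, ← map_zpow Tr, ← map_zpow Tr, t1, t2,
      ← map_mul Tr, ← ofAdd_add]
    norm_num
  have hinj : Function.Injective ψ := by
    intro x y hxy
    have h3 := congrArg φ hxy
    rw [hψ, hψ] at h3
    have h4 := congrArg Multiplicative.toAdd (Tr_injective h3)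
    simp only [toAdd_ofAdd, Prod.ext_iff] at h4
    apply Multiplicative.toAdd.injective
    exact Prod.ext (by exact_mod_cast h4.1) (by exact_mod_cast h4.2)
  have hrange : ψ.range = Subgroup.closure {A, B} := by
    apply le_antisymm
    · rintro g ⟨x, rfl⟩
      show A ^ x.toAdd.1 * B ^ x.toAdd.2 ∈ _
      exact mul_mem (zpow_mem (Subgroup.subset_closure (by simp)) _)
        (zpow_mem (Subgroup.subset_closure (by simp)) _)
    · rw [Subgroup.closure_le]
      intro g hg
      simp only [Set.mem_insert_iff, Set.mem_singleton_iff] at hg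
      rcases hg with rfl | rfl
      · exact ⟨.ofAdd (1, 0), by show A ^ (1 : ℤ) * B ^ (0 : ℤ) = _; simp⟩
      · exact ⟨.ofAdd (0, 1), by show A ^ (0 : ℤ) * B ^ (1 : ℤ) = _; simp⟩
  exact (MulEquiv.subgroupCongr hrange.symm).trans (MonoidHom.ofInjective hinj).symm
end
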